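/- Let X, Y, Z be pairwise disjoint finite sets with |X| = |Y| = |Z| = n, let # be a symbol not in X ∪ Y ∪ Z, and let T ⊆ X × Y × Z. Define the 4-sides Letter Boxed puzzle with alphabet Σ = X ∪ Y ∪ Z ∪ {#}, dictionary D = {# x y z # : (x, y, z) ∈ T} (each word having length 5), Γ₁ the multiset of n copies of #, Γ₂ = X, Γ₃ = Y, and Γ₄ = Z (each element with multiplicity 1). Then the puzzle admits a solution of length at most n if and only if there exists S ⊆ T with |S| = n such that every element of X ∪ Y ∪ Z appears in exactly one triple of S. -/

import Mathlib

/-!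
Letter Boxed with `S` sides: alphabet a type `A`, dictionary `D : Finset (List A)`
(of nonempty words), sides `Γ : Fin S → Multiset A`.

A solution is a list of words `ws` (each in `D`, consecutive words linked
last-letter-to-first-letter) together with a side assignment `sides : ℕ → Fin S`
for the positions of the concatenation `σ = ws.flatten`, such that consecutive positions
lie on different sides (except across word boundaries, where the side is repeated),
every position lies on its assigned side, and every character of every side is covered
the required number of times.
-/

/-- Position `j` (0-based) of the concatenation of `ws` is the last character of one
of the words of `ws`. -/
def WordEnd {A : Type} (ws : List (List A)) (j : ℕ) : Prop :=
  ∃ t < ws.length, j + 1 = ((ws.take (t + 1)).map List.length).sum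

/-- `(ws, sides)` is a solution of the Letter Boxed puzzle with dictionary `D` and
sides `Γ`.  The four conditions are the linking condition between consecutive words,
the alternation condition on sides, the membership condition, and the covering
condition. -/
def IsLBSolution {S : ℕ} {A : Type} [DecidableEq A]
    (D : Finset (List A)) (Γ : Fin S → Multiset A)
    (ws : List (List A)) (sides : ℕ → Fin S) : Prop :=
  (∀ w ∈ ws, w ∈ D) ∧
  (∀ i : ℕ, i + 1 < ws.length → (ws.getD i []).getLast? = (ws.getD (i + 1) []).head?) ∧
  (∀ j : ℕ, j + 1 < ws.flatten.length →
    ((WordEnd ws j → sides j = sides (j + 1)) ∧ (¬ WordEnd ws j → sides j ≠ sides (j + 1)))) ∧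
  (∀ (j : ℕ) (h : j < ws.flatten.length), ws.flatten.get ⟨j, h⟩ ∈ Γ (sides j)) ∧
  (∀ (i : Fin S) (γ : A),
    (Γ i).count γ ≤
      {j : ℕ | ∃ h : j < ws.flatten.length, ws.flatten.get ⟨j, h⟩ = γ ∧ sides j = i ∧
        (j + 1 = ws.flatten.length ∨ ¬ WordEnd ws j)}.ncard)

/-!
The triples spelled by the words of a solution cover every element of `X ∪ Y ∪ Z`: each such
letter must occur in the solution, and by disjointness it can only occur as its own coordinate
of a triple. With at most `n` triples and `|X| = |Y| = |Z| = n`, every coordinate projection is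
then a surjection onto a part at least as large as its domain, hence a bijection, and the
triples form a perfect matching. Conversely, the words of a perfect matching, in any order and
with the five letters of each word on the sides `#, X, Y, Z, #`, form a solution.
-/

open Finset

namespace List

variable {α : Type*} {m : ℕ} {ws : List (List α)}

theorem exists_map_eq_of_forall_mem_image {β : Type*} [DecidableEq β] {f : α → β}
    {s : Finset α} {bs : List β} (h : ∀ b ∈ bs, b ∈ s.image f) :
    ∃ as : List α, (∀ a ∈ as, a ∈ s) ∧ as.map f = bs := by
  induction bs with
  | nil => exact ⟨[], by simp, rfl⟩
  | cons b bs ih =>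
    obtain ⟨a, ha, rfl⟩ := Finset.mem_image.1 (h b mem_cons_self)
    obtain ⟨as, has, rfl⟩ := ih fun b hb => h b (mem_cons_of_mem _ hb)
    exact ⟨a :: as, forall_mem_cons.2 ⟨ha, has⟩, rfl⟩

theorem length_flatten_of_forall_length_eq (h : ∀ w ∈ ws, w.length = m) :
    ws.flatten.length = ws.length * m := by
  rw [length_flatten, map_congr_left h, map_const', sum_replicate, smul_eq_mul]

theorem getElem?_flatten_of_forall_length_eq (h : ∀ w ∈ ws, w.length = m) (hm : 0 < m)
    (j : ℕ) : ws.flatten[j]? = ws[j / m]?.bind (·[j % m]?) := by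
  induction ws generalizing j with
  | nil => simp
  | cons w ws ih =>
    rw [flatten_cons, getElem?_append, h w mem_cons_self]
    split_ifs with hj
    · simp [Nat.div_eq_of_lt hj, Nat.mod_eq_of_lt hj]
    · rw [ih (fun w hw => h w (mem_cons_of_mem _ hw)), Nat.div_eq_sub_div (a := j) hm (by omega),
        Nat.mod_eq_sub_mod (a := j) (by omega)]
      simp

end List

namespace Set

variable {α β : Type*} {f : α → β} {s : Set α} {t : Set β} {R : β → α → Prop}

theorem surjOn_iff_forall_exists_of_iff (hR : ∀ x ∈ s, ∀ b ∈ t, R b x ↔ f x = b) :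
    SurjOn f s t ↔ ∀ b ∈ t, ∃ x ∈ s, R b x :=
  forall₂_congr fun b hb => exists_congr fun x =>
    ⟨fun ⟨hx, hfx⟩ => ⟨hx, (hR x hx b hb).2 hfx⟩, fun ⟨hx, hRx⟩ => ⟨hx, (hR x hx b hb).1 hRx⟩⟩

theorem bijOn_iff_forall_existsUnique_of_iff (hf : MapsTo f s t)
    (hR : ∀ x ∈ s, ∀ b ∈ t, R b x ↔ f x = b) :
    BijOn f s t ↔ ∀ b ∈ t, ∃! x, x ∈ s ∧ R b x := by
  constructor
  · rintro ⟨-, hinj, hsurj⟩ b hb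
    obtain ⟨x, hx, rfl⟩ := hsurj hb
    exact ⟨x, ⟨hx, (hR x hx _ hb).2 rfl⟩, fun y ⟨hy, hRy⟩ => hinj hy hx ((hR y hy _ hb).1 hRy)⟩
  · intro h
    refine ⟨hf, fun x hx y hy hxy => ?_, (surjOn_iff_forall_exists_of_iff hR).2 fun b hb => ?_⟩
    · have hRx := (hR x hx _ (hf hx)).2 rfl
      have hRy := (hR y hy _ (hf hx)).2 hxy.symm
      exact (h _ (hf hx)).unique ⟨hx, hRx⟩ ⟨hy, hRy⟩
    · obtain ⟨x, hx, -⟩ := h b hb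
      exact ⟨x, hx⟩

end Set

section WordEnd

variable {A : Type} {m : ℕ} {ws : List (List A)}

theorem wordEnd_iff_of_forall_length_eq (h : ∀ w ∈ ws, w.length = m + 1) (j : ℕ) :
    WordEnd ws j ↔ j % (m + 1) = m ∧ j < ws.length * (m + 1) := by
  have hprefix : ∀ t < ws.length,
      ((ws.take (t + 1)).map List.length).sum = (t + 1) * (m + 1) := by
    intro t ht
    rw [← List.length_flatten, List.length_flatten_of_forall_length_eq
      (fun w hw => h w (List.mem_of_mem_take hw)), List.length_take, min_eq_left ht]
  constructor
  · rintro ⟨t, ht, hj⟩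
    rw [hprefix t ht, add_one_mul] at hj
    obtain rfl : j = m + t * (m + 1) := by omega
    refine ⟨by rw [Nat.add_mul_mod_self_right, Nat.mod_eq_of_lt m.lt_succ_self], ?_⟩
    nlinarith
  · rintro ⟨hmod, hlt⟩
    have hq := (Nat.div_lt_iff_lt_mul m.succ_pos).2 hlt
    refine ⟨j / (m + 1), hq, ?_⟩
    rw [hprefix _ hq]
    linarith [Nat.div_add_mod j (m + 1)]

end WordEnd

section LetterBoxed

variable {S : ℕ} {A : Type}

def coveringPositions (ws : List (List A)) (sides : ℕ → Fin S) (i : Fin S) (γ : A) : Set ℕ :=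
  {j : ℕ | ∃ h : j < ws.flatten.length, ws.flatten.get ⟨j, h⟩ = γ ∧ sides j = i ∧
    (j + 1 = ws.flatten.length ∨ ¬ WordEnd ws j)}

theorem coveringPositions_finite (ws : List (List A)) (sides : ℕ → Fin S) (i : Fin S) (γ : A) :
    (coveringPositions ws sides i γ).Finite :=
  (Set.finite_Iio ws.flatten.length).subset fun _ ⟨hj, _⟩ => hj

theorem IsLBSolution.mem_flatten [DecidableEq A] {D : Finset (List A)} {Γ : Fin S → Multiset A}
    {ws : List (List A)} {sides : ℕ → Fin S} (hsol : IsLBSolution D Γ ws sides) {i : Fin S}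
    {γ : A} (hγ : γ ∈ Γ i) : γ ∈ ws.flatten := by
  have hpos : 0 < (coveringPositions ws sides i γ).ncard :=
    (Multiset.count_pos.2 hγ).trans_le (hsol.2.2.2.2 i γ)
  obtain ⟨j, hj, hjγ, -⟩ := Set.nonempty_of_ncard_ne_zero hpos.ne'
  exact hjγ ▸ List.get_mem _ _

theorem count_le_ncard_coveringPositions_of_nodup [DecidableEq A] {s : Multiset A} (hs : s.Nodup)
    {ws : List (List A)} {sides : ℕ → Fin S} {i : Fin S} {γ : A}
    (h : γ ∈ s → (coveringPositions ws sides i γ).Nonempty) :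
    s.count γ ≤ (coveringPositions ws sides i γ).ncard := by
  by_cases hγ : γ ∈ s
  · rw [Multiset.count_eq_one_of_mem hs hγ]
    exact (Set.ncard_pos (coveringPositions_finite ..)).2 (h hγ)
  · rw [Multiset.count_eq_zero.2 hγ]
    exact Nat.zero_le _

end LetterBoxed

section Matching

variable {A : Type} {X Y Z : Finset A}

section Incidence

variable {t : A × A × A} {a : A}

theorem incident_iff_fst_eq (hXY : Disjoint X Y) (hXZ : Disjoint X Z)
    (ht : t.1 ∈ X ∧ t.2.1 ∈ Y ∧ t.2.2 ∈ Z) (ha : a ∈ X) :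
    (t.1 = a ∨ t.2.1 = a ∨ t.2.2 = a) ↔ t.1 = a := by
  grind [Finset.disjoint_left]

theorem incident_iff_snd_fst_eq (hXY : Disjoint X Y) (hYZ : Disjoint Y Z)
    (ht : t.1 ∈ X ∧ t.2.1 ∈ Y ∧ t.2.2 ∈ Z) (ha : a ∈ Y) :
    (t.1 = a ∨ t.2.1 = a ∨ t.2.2 = a) ↔ t.2.1 = a := by
  grind [Finset.disjoint_left]

theorem incident_iff_snd_snd_eq (hXZ : Disjoint X Z) (hYZ : Disjoint Y Z)
    (ht : t.1 ∈ X ∧ t.2.1 ∈ Y ∧ t.2.2 ∈ Z) (ha : a ∈ Z) :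
    (t.1 = a ∨ t.2.1 = a ∨ t.2.2 = a) ↔ t.2.2 = a := by
  grind [Finset.disjoint_left]

end Incidence

variable [DecidableEq A] {S : Finset (A × A × A)}

theorem forall_exists_incident_iff_surjOn (hXY : Disjoint X Y) (hXZ : Disjoint X Z)
    (hYZ : Disjoint Y Z) (hS : ∀ t ∈ S, t.1 ∈ X ∧ t.2.1 ∈ Y ∧ t.2.2 ∈ Z) :
    (∀ a ∈ X ∪ Y ∪ Z, ∃ t ∈ S, t.1 = a ∨ t.2.1 = a ∨ t.2.2 = a) ↔
      Set.SurjOn (Prod.fst : A × A × A → A) S X ∧ Set.SurjOn (fun t : A × A × A => t.2.1) S Y ∧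
        Set.SurjOn (fun t : A × A × A => t.2.2) S Z := by
  rw [forall_mem_union, forall_mem_union, and_assoc]
  refine and_congr ?_ (and_congr ?_ ?_) <;> symm <;> apply Set.surjOn_iff_forall_exists_of_iff
  exacts [fun t ht _ => incident_iff_fst_eq hXY hXZ (hS t ht),
    fun t ht _ => incident_iff_snd_fst_eq hXY hYZ (hS t ht),
    fun t ht _ => incident_iff_snd_snd_eq hXZ hYZ (hS t ht)]

theorem forall_existsUnique_incident_iff_bijOn (hXY : Disjoint X Y) (hXZ : Disjoint X Z)
    (hYZ : Disjoint Y Z) (hS : ∀ t ∈ S, t.1 ∈ X ∧ t.2.1 ∈ Y ∧ t.2.2 ∈ Z) :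
    (∀ a ∈ X ∪ Y ∪ Z, ∃! t, t ∈ S ∧ (t.1 = a ∨ t.2.1 = a ∨ t.2.2 = a)) ↔
      Set.BijOn (Prod.fst : A × A × A → A) S X ∧ Set.BijOn (fun t : A × A × A => t.2.1) S Y ∧
        Set.BijOn (fun t : A × A × A => t.2.2) S Z := by
  rw [forall_mem_union, forall_mem_union, and_assoc]
  refine and_congr ?_ (and_congr ?_ ?_) <;> symm <;>
    apply Set.bijOn_iff_forall_existsUnique_of_iff
  exacts [fun t ht => (hS t ht).1, fun t ht _ => incident_iff_fst_eq hXY hXZ (hS t ht),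
    fun t ht => (hS t ht).2.1, fun t ht _ => incident_iff_snd_fst_eq hXY hYZ (hS t ht),
    fun t ht => (hS t ht).2.2, fun t ht _ => incident_iff_snd_snd_eq hXZ hYZ (hS t ht)]

theorem card_eq_and_perfect_of_covering {n : ℕ} (hXY : Disjoint X Y) (hXZ : Disjoint X Z)
    (hYZ : Disjoint Y Z) (hS : ∀ t ∈ S, t.1 ∈ X ∧ t.2.1 ∈ Y ∧ t.2.2 ∈ Z)
    (hX : X.card = n) (hY : Y.card = n) (hZ : Z.card = n) (hcard : S.card ≤ n)
    (hcover : ∀ a ∈ X ∪ Y ∪ Z, ∃ t ∈ S, t.1 = a ∨ t.2.1 = a ∨ t.2.2 = a) :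
    S.card = n ∧ ∀ a ∈ X ∪ Y ∪ Z, ∃! t, t ∈ S ∧ (t.1 = a ∨ t.2.1 = a ∨ t.2.2 = a) := by
  have hbij : ∀ {W : Finset A} {p : A × A × A → A}, W.card = n → Set.MapsTo p S W →
      Set.SurjOn p S W → Set.BijOn p S W := fun hW hp hsurj =>
    ⟨hp, injOn_of_surjOn_of_card_le _ hp hsurj (hW ▸ hcard), hsurj⟩
  obtain ⟨hsX, hsY, hsZ⟩ := (forall_exists_incident_iff_surjOn hXY hXZ hYZ hS).1 hcover
  have hbX := hbij hX (fun t ht => (hS t ht).1) hsX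
  refine ⟨hbX.finsetCard_eq.trans hX, (forall_existsUnique_incident_iff_bijOn hXY hXZ hYZ hS).2
    ⟨hbX, hbij hY (fun t ht => (hS t ht).2.1) hsY, hbij hZ (fun t ht => (hS t ht).2.2) hsZ⟩⟩

end Matching

section TripleWords

variable {A : Type} {hash : A} {ts : List (A × A × A)}

def tripleWord (hash : A) (t : A × A × A) : List A := [hash, t.1, t.2.1, t.2.2, hash]

/-- Offset `4` in a word, the closing `#`, wraps around to side `0`. -/
def boxSide (j : ℕ) : Fin 4 := Fin.ofNat 4 (j % 5)

theorem boxSide_succ_eq_iff (j : ℕ) : boxSide (j + 1) = boxSide j ↔ j % 5 = 4 := by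
  simp only [boxSide, Fin.ext_iff, Fin.val_ofNat]
  omega

theorem mem_flatten_map_tripleWord {a : A} (ha : a ≠ hash) :
    a ∈ (ts.map (tripleWord hash)).flatten ↔ ∃ t ∈ ts, t.1 = a ∨ t.2.1 = a ∨ t.2.2 = a := by
  simp [tripleWord, ha, eq_comm]

theorem length_of_mem_map_tripleWord : ∀ w ∈ ts.map (tripleWord hash), w.length = 5 := by
  simp only [List.forall_mem_map]
  exact fun _ _ => rfl

theorem length_flatten_map_tripleWord :
    (ts.map (tripleWord hash)).flatten.length = ts.length * 5 := by
  rw [List.length_flatten_of_forall_length_eq length_of_mem_map_tripleWord, List.length_map]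

theorem getElem?_flatten_map_tripleWord (j : ℕ) :
    (ts.map (tripleWord hash)).flatten[j]? =
      ts[j / 5]?.bind fun t => (tripleWord hash t)[j % 5]? := by
  rw [List.getElem?_flatten_of_forall_length_eq length_of_mem_map_tripleWord (by norm_num),
    List.getElem?_map, Option.bind_map]
  rfl

theorem wordEnd_map_tripleWord_iff (j : ℕ) :
    WordEnd (ts.map (tripleWord hash)) j ↔ j % 5 = 4 ∧ j < ts.length * 5 := by
  rw [wordEnd_iff_of_forall_length_eq (m := 4) length_of_mem_map_tripleWord, List.length_map]

theorem mem_coveringPositions_map_tripleWord {q r : ℕ} {t : A × A × A} {γ : A}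
    (htq : ts[q]? = some t) (hr : r < 4) (hγ : (tripleWord hash t)[r]? = some γ) :
    5 * q + r ∈ coveringPositions (ts.map (tripleWord hash)) boxSide (boxSide r) γ := by
  have hget : (ts.map (tripleWord hash)).flatten[5 * q + r]? = some γ := by
    rw [getElem?_flatten_map_tripleWord, show (5 * q + r) / 5 = q by omega,
      show (5 * q + r) % 5 = r by omega, htq]
    exact hγ
  obtain ⟨hj, hjγ⟩ := List.getElem?_eq_some_iff.1 hget
  refine ⟨hj, hjγ, ?_, Or.inr ?_⟩
  · simp only [boxSide, Fin.ext_iff, Fin.val_ofNat]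
    omega
  · rw [wordEnd_map_tripleWord_iff]
    omega

variable {n : ℕ} {X Y Z : Finset A}

theorem flatten_get_mem_boxSide [DecidableEq A] (hlen : ts.length = n)
    (hparts : ∀ t ∈ ts, t.1 ∈ X ∧ t.2.1 ∈ Y ∧ t.2.2 ∈ Z) (j : ℕ)
    (hj : j < (ts.map (tripleWord hash)).flatten.length) :
    (ts.map (tripleWord hash)).flatten.get ⟨j, hj⟩ ∈
      ![Multiset.replicate n hash, X.val, Y.val, Z.val] (boxSide j) := by
  have hq : j / 5 < ts.length := by rw [length_flatten_map_tripleWord] at hj; omega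
  obtain ⟨h1, h2, h3⟩ := hparts _ (List.getElem_mem hq)
  have hget : some ((ts.map (tripleWord hash)).flatten.get ⟨j, hj⟩) =
      (tripleWord hash ts[j / 5])[j % 5]? := by
    rw [List.get_eq_getElem, ← List.getElem?_eq_getElem, getElem?_flatten_map_tripleWord,
      List.getElem?_eq_getElem hq]
    rfl
  have hn : n ≠ 0 := by omega
  unfold boxSide
  generalize (ts.map (tripleWord hash)).flatten.get ⟨j, hj⟩ = c at hget ⊢
  have hr := Nat.mod_lt j (show 5 > 0 by norm_num)
  generalize j % 5 = r at hget hr ⊢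
  interval_cases r <;> simp only [tripleWord, List.getElem?_cons_zero, List.getElem?_cons_succ,
    Option.some.injEq] at hget <;> subst hget
  exacts [Multiset.mem_replicate.2 ⟨hn, rfl⟩, h1, h2, h3, Multiset.mem_replicate.2 ⟨hn, rfl⟩]

theorem count_le_ncard_coveringPositions_map_tripleWord [DecidableEq A] (hlen : ts.length = n)
    (hsX : ∀ a ∈ X, ∃ t ∈ ts, t.1 = a) (hsY : ∀ a ∈ Y, ∃ t ∈ ts, t.2.1 = a)
    (hsZ : ∀ a ∈ Z, ∃ t ∈ ts, t.2.2 = a) (i : Fin 4) (γ : A) :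
    (![Multiset.replicate n hash, X.val, Y.val, Z.val] i).count γ ≤
      (coveringPositions (ts.map (tripleWord hash)) boxSide i γ).ncard := by
  have hletter : ∀ {W : Finset A} {p : A × A × A → A} (r : ℕ), r < 4 →
      (∀ t, (tripleWord hash t)[r]? = some (p t)) → (∀ a ∈ W, ∃ t ∈ ts, p t = a) →
      W.val.count γ ≤ (coveringPositions (ts.map (tripleWord hash)) boxSide (boxSide r) γ).ncard :=
    fun r hr hp hW => count_le_ncard_coveringPositions_of_nodup (Finset.nodup _) fun hγ => by
      obtain ⟨t, ht, rfl⟩ := hW γ hγ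
      obtain ⟨q, hq⟩ := List.mem_iff_getElem?.1 ht
      exact ⟨_, mem_coveringPositions_map_tripleWord hq hr (hp t)⟩
  fin_cases i
  · show (Multiset.replicate n hash).count γ ≤ _
    rw [Multiset.count_replicate]
    split_ifs with h
    · subst h
      refine Set.le_ncard_of_inj_on_range (5 * ·) (fun q hq => ?_) (fun _ _ _ _ h => by omega)
        (coveringPositions_finite ..)
      have htq : ts[q]? = some ts[q] := List.getElem?_eq_getElem (by omega)
      exact mem_coveringPositions_map_tripleWord htq (r := 0) (by norm_num) rfl
    · exact Nat.zero_le _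
  exacts [hletter 1 (by norm_num) (fun _ => rfl) hsX, hletter 2 (by norm_num) (fun _ => rfl) hsY,
    hletter 3 (by norm_num) (fun _ => rfl) hsZ]

theorem isLBSolution_map_tripleWord [DecidableEq A] {T S : Finset (A × A × A)} (hST : S ⊆ T)
    (hcard : S.card = n) (hparts : ∀ t ∈ S, t.1 ∈ X ∧ t.2.1 ∈ Y ∧ t.2.2 ∈ Z)
    (hsX : Set.SurjOn (Prod.fst : A × A × A → A) S X)
    (hsY : Set.SurjOn (fun t : A × A × A => t.2.1) S Y)
    (hsZ : Set.SurjOn (fun t : A × A × A => t.2.2) S Z) :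
    IsLBSolution (T.image (tripleWord hash)) ![Multiset.replicate n hash, X.val, Y.val, Z.val]
      (S.toList.map (tripleWord hash)) boxSide := by
  have hlen : S.toList.length = n := by rw [length_toList, hcard]
  have hsurj : ∀ {W : Finset A} {p : A × A × A → A}, Set.SurjOn p S W →
      ∀ a ∈ W, ∃ t ∈ S.toList, p t = a := fun hp a ha => by
    obtain ⟨t, ht, rfl⟩ := hp ha
    exact ⟨t, mem_toList.2 ht, rfl⟩
  refine ⟨?_, ?_, ?_, flatten_get_mem_boxSide hlen fun t ht => hparts t (mem_toList.1 ht),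
    count_le_ncard_coveringPositions_map_tripleWord hlen (hsurj hsX) (hsurj hsY) (hsurj hsZ)⟩
  · simp only [List.forall_mem_map]
    exact fun t ht => mem_image_of_mem _ (hST (mem_toList.1 ht))
  · intro i hi
    rw [List.getD_eq_getElem _ _ (by omega), List.getD_eq_getElem _ _ hi]
    simp [tripleWord]
  · intro j hj
    rw [length_flatten_map_tripleWord] at hj
    have h : WordEnd (S.toList.map (tripleWord hash)) j ↔ boxSide j = boxSide (j + 1) := by
      rw [wordEnd_map_tripleWord_iff, eq_comm (a := boxSide j), boxSide_succ_eq_iff]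
      exact and_iff_left (by omega)
    exact ⟨h.1, mt h.2⟩

end TripleWords

/-- The reduction from 3D MATCHING: with `X, Y, Z` pairwise disjoint of size `n`,
`#` a symbol outside `X ∪ Y ∪ Z`, and `T ⊆ X × Y × Z`, the 4-sides puzzle with
dictionary `{# x y z # : (x,y,z) ∈ T}`, `Γ₁` consisting of `n` copies of `#`,
`Γ₂ = X`, `Γ₃ = Y`, `Γ₄ = Z` admits a solution of length at most `n` iff `T` contains a
perfect three-dimensional matching. -/
theorem letterBoxed_iff_3dmatching {A : Type} [DecidableEq A] {n : ℕ}
    (X Y Z : Finset A) (hash : A)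
    (hXY : Disjoint X Y) (hXZ : Disjoint X Z) (hYZ : Disjoint Y Z)
    (hhash : hash ∉ X ∪ Y ∪ Z)
    (hX : X.card = n) (hY : Y.card = n) (hZ : Z.card = n)
    (T : Finset (A × A × A)) (hT : ∀ t ∈ T, t.1 ∈ X ∧ t.2.1 ∈ Y ∧ t.2.2 ∈ Z) :
    (∃ (ws : List (List A)) (sides : ℕ → Fin 4),
        ws.length ≤ n ∧
        IsLBSolution (T.image fun t => [hash, t.1, t.2.1, t.2.2, hash])
          ![Multiset.replicate n hash, X.val, Y.val, Z.val] ws sides) ↔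
    (∃ S : Finset (A × A × A), S ⊆ T ∧ S.card = n ∧
        ∀ a ∈ X ∪ Y ∪ Z, ∃! t, t ∈ S ∧ (t.1 = a ∨ t.2.1 = a ∨ t.2.2 = a)) := by
  have hparts : ∀ {S : Finset (A × A × A)}, S ⊆ T → ∀ t ∈ S, t.1 ∈ X ∧ t.2.1 ∈ Y ∧ t.2.2 ∈ Z :=
    fun hST t ht => hT t (hST ht)
  constructor
  · rintro ⟨ws, sides, hlen, hsol⟩
    obtain ⟨ts, hts, rfl⟩ := List.exists_map_eq_of_forall_mem_image hsol.1
    have hST : ts.toFinset ⊆ T := fun t ht => hts t (List.mem_toFinset.1 ht)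
    have hcover : ∀ a ∈ X ∪ Y ∪ Z, ∃ t ∈ ts.toFinset, t.1 = a ∨ t.2.1 = a ∨ t.2.2 = a := by
      intro a ha
      have hflat : a ∈ (ts.map (tripleWord hash)).flatten := by
        rcases mem_union.1 ha with ha | ha
        · rcases mem_union.1 ha with ha | ha
          exacts [hsol.mem_flatten (i := 1) ha, hsol.mem_flatten (i := 2) ha]
        · exact hsol.mem_flatten (i := 3) ha
      simpa using (mem_flatten_map_tripleWord (ne_of_mem_of_not_mem ha hhash)).1 hflat
    have hcard : ts.toFinset.card ≤ n := (List.toFinset_card_le ts).trans (by simpa using hlen)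
    exact ⟨ts.toFinset, hST,
      card_eq_and_perfect_of_covering hXY hXZ hYZ (hparts hST) hX hY hZ hcard hcover⟩
  · rintro ⟨S, hST, hcard, hmatch⟩
    obtain ⟨hbX, hbY, hbZ⟩ :=
      (forall_existsUnique_incident_iff_bijOn hXY hXZ hYZ (hparts hST)).1 hmatch
    exact ⟨_, boxSide, by simp [hcard],
      isLBSolution_map_tripleWord hST hcard (hparts hST) hbX.surjOn hbY.surjOn hbZ.surjOn⟩
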